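/- arXiv:2409.19327 — 5 statements merged into one kernel-verified Lean document; each statement's English description precedes it below -/
import Mathlib

section
/- For every t ≥ 0, the function u_t(x,y) = ln(2e^x/(1+t^2+2t e^x cos y + e^{2x})) satisfies the Liouville equation Δu + e^{2u} = 0 on ℝ², and u_t is bounded from above. -/
noncomputable def pdx (f : ℝ × ℝ → ℝ) (p : ℝ × ℝ) : ℝ := fderiv ℝ f p (1, 0)
noncomputable def pdy (f : ℝ × ℝ → ℝ) (p : ℝ × ℝ) : ℝ := fderiv ℝ f p (0, 1)
noncomputable def lap (f : ℝ × ℝ → ℝ) (p : ℝ × ℝ) : ℝ :=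
  pdx (pdx f) p + pdy (pdy f) p

/-!
With `f(z) = e^z + t` one has `u_t = log (2|f'| / (1 + |f|²))`, the classical Liouville
representation. Concretely `u_t = log 2 + x - log D` with `D = 1 + |e^z + t|²`; since `x` is harmonic,
`Δu_t = -Δ log D = -(D ΔD - |∇D|²) / D²`, and a direct computation gives
`D ΔD - |∇D|² = 4 e^{2x}`, which is `D² e^{2u_t}`. For the bound, `|e^z + t| ≥ e^x - |t|` gives
`D ≥ 1 + (e^x - |t|)²`, so `e^{u_t} ≤ 2 (1 + |t|)`.
-/

open Real

theorem pdx_eq_of_hasDerivAt {f : ℝ × ℝ → ℝ} {x y a : ℝ} (hf : DifferentiableAt ℝ f (x, y))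
    (h : HasDerivAt (fun x => f (x, y)) a x) : pdx f (x, y) = a := by
  have hslice : HasDerivAt (fun x => (x, y)) ((1 : ℝ), (0 : ℝ)) x :=
    (hasDerivAt_id x).prodMk (hasDerivAt_const x y)
  exact (hf.hasFDerivAt.comp_hasDerivAt x hslice).unique h

theorem pdy_eq_of_hasDerivAt {f : ℝ × ℝ → ℝ} {x y a : ℝ} (hf : DifferentiableAt ℝ f (x, y))
    (h : HasDerivAt (fun y => f (x, y)) a y) : pdy f (x, y) = a := by
  have hslice : HasDerivAt (fun y => (x, y)) ((0 : ℝ), (1 : ℝ)) y :=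
    (hasDerivAt_const y x).prodMk (hasDerivAt_id y)
  exact (hf.hasFDerivAt.comp_hasDerivAt y hslice).unique h

theorem Real.exp_two_mul_eq_sq (x : ℝ) : exp (2 * x) = exp x ^ 2 := by
  exact_mod_cast exp_nat_mul x 2

namespace LiouvilleSolution

noncomputable def denom (t : ℝ) (p : ℝ × ℝ) : ℝ :=
  1 + t ^ 2 + 2 * t * exp p.1 * cos p.2 + exp (2 * p.1)

noncomputable def denomFst (t : ℝ) (p : ℝ × ℝ) : ℝ :=
  2 * t * exp p.1 * cos p.2 + 2 * exp (2 * p.1)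

noncomputable def denomSnd (t : ℝ) (p : ℝ × ℝ) : ℝ :=
  -(2 * t * exp p.1 * sin p.2)

noncomputable def sol (t : ℝ) (p : ℝ × ℝ) : ℝ :=
  log (2 * exp p.1 / denom t p)

variable (t : ℝ)

theorem denom_eq (p : ℝ × ℝ) :
    denom t p = 1 + (exp p.1 * cos p.2 + t) ^ 2 + (exp p.1 * sin p.2) ^ 2 := by
  rw [denom, exp_two_mul_eq_sq]
  linear_combination exp p.1 ^ 2 * (sin_sq_add_cos_sq p.2).symm

theorem denom_pos (p : ℝ × ℝ) : 0 < denom t p := by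
  rw [denom_eq]; positivity

theorem sub_abs_sq_add_one_le_denom (p : ℝ × ℝ) :
    (exp p.1 - |t|) ^ 2 + 1 ≤ denom t p := by
  have hc : 0 ≤ t * cos p.2 + |t| := by
    have := neg_abs_le (t * cos p.2)
    rw [abs_mul] at this
    nlinarith [abs_cos_le_one p.2, abs_nonneg t]
  have hgap : denom t p - ((exp p.1 - |t|) ^ 2 + 1) = 2 * exp p.1 * (t * cos p.2 + |t|) := by
    rw [denom, exp_two_mul_eq_sq]
    linear_combination -(sq_abs t)
  nlinarith [mul_nonneg (exp_pos p.1).le hc]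

@[fun_prop]
theorem differentiable_denom : Differentiable ℝ (denom t) := by
  unfold denom; fun_prop

@[fun_prop]
theorem differentiable_denomFst : Differentiable ℝ (denomFst t) := by
  unfold denomFst; fun_prop

@[fun_prop]
theorem differentiable_denomSnd : Differentiable ℝ (denomSnd t) := by
  unfold denomSnd; fun_prop

variable (x y : ℝ)

theorem hasDerivAt_denom_fst : HasDerivAt (fun x => denom t (x, y)) (denomFst t (x, y)) x := by
  refine ((((hasDerivAt_exp x).const_mul (2 * t)).mul_const (cos y)).const_add (1 + t ^ 2)).add
    ((hasDerivAt_id' x).const_mul 2).exp |>.congr_deriv ?_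
  simp only [denomFst]; ring

theorem hasDerivAt_denom_snd : HasDerivAt (fun y => denom t (x, y)) (denomSnd t (x, y)) y := by
  refine (((hasDerivAt_cos y).const_mul (2 * t * exp x)).const_add (1 + t ^ 2)).add_const
    (exp (2 * x)) |>.congr_deriv ?_
  simp only [denomSnd]; ring

theorem hasDerivAt_denomFst_fst :
    HasDerivAt (fun x => denomFst t (x, y)) (2 * t * exp x * cos y + 4 * exp (2 * x)) x := by
  refine (((hasDerivAt_exp x).const_mul (2 * t)).mul_const (cos y)).add
    ((((hasDerivAt_id' x).const_mul 2).exp).const_mul 2) |>.congr_deriv ?_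
  ring

theorem hasDerivAt_denomSnd_snd :
    HasDerivAt (fun y => denomSnd t (x, y)) (-(2 * t * exp x * cos y)) y :=
  ((hasDerivAt_sin y).const_mul (2 * t * exp x)).neg

theorem denom_mul_lap_denom_sub_sq_grad :
    denom t (x, y) * ((2 * t * exp x * cos y + 4 * exp (2 * x)) + -(2 * t * exp x * cos y))
      - (denomFst t (x, y) ^ 2 + denomSnd t (x, y) ^ 2) = 4 * exp (2 * x) := by
  simp only [denom, denomFst, denomSnd, exp_two_mul_eq_sq]
  linear_combination (-4 * t ^ 2 * exp x ^ 2) * sin_sq_add_cos_sq y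

theorem sol_eq : sol t = fun p => log 2 + p.1 - log (denom t p) := by
  funext p
  rw [sol, log_div (by positivity) (denom_pos t p).ne', log_mul two_ne_zero (exp_pos _).ne',
    log_exp]

theorem differentiable_sol : Differentiable ℝ (sol t) := by
  rw [sol_eq]
  exact fun p => by fun_prop (disch := exact (denom_pos t p).ne')

theorem pdx_sol : pdx (sol t) = fun p => 1 - denomFst t p / denom t p := by
  funext ⟨x, y⟩
  refine pdx_eq_of_hasDerivAt (differentiable_sol t _) ?_
  rw [sol_eq]
  exact ((hasDerivAt_id' x).const_add (log 2)).sub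
    ((hasDerivAt_denom_fst t x y).log (denom_pos t _).ne')

theorem pdy_sol : pdy (sol t) = fun p => -(denomSnd t p / denom t p) := by
  funext ⟨x, y⟩
  refine pdy_eq_of_hasDerivAt (differentiable_sol t _) ?_
  rw [sol_eq]
  exact ((hasDerivAt_const y (log 2 + x)).sub
    ((hasDerivAt_denom_snd t x y).log (denom_pos t _).ne')).congr_deriv (zero_sub _)

theorem pdx_pdx_sol : pdx (pdx (sol t)) (x, y) =
    -(((2 * t * exp x * cos y + 4 * exp (2 * x)) * denom t (x, y) - denomFst t (x, y) ^ 2)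
      / denom t (x, y) ^ 2) := by
  rw [pdx_sol]
  refine pdx_eq_of_hasDerivAt (by fun_prop (disch := exact (denom_pos t _).ne')) ?_
  refine ((hasDerivAt_const x 1).sub ((hasDerivAt_denomFst_fst t x y).div
    (hasDerivAt_denom_fst t x y) (denom_pos t _).ne')).congr_deriv ?_
  ring

theorem pdy_pdy_sol : pdy (pdy (sol t)) (x, y) =
    -((-(2 * t * exp x * cos y) * denom t (x, y) - denomSnd t (x, y) ^ 2)
      / denom t (x, y) ^ 2) := by
  rw [pdy_sol]
  refine pdy_eq_of_hasDerivAt (by fun_prop (disch := exact (denom_pos t _).ne')) ?_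
  refine ((hasDerivAt_denomSnd_snd t x y).div
    (hasDerivAt_denom_snd t x y) (denom_pos t _).ne').neg.congr_deriv ?_
  ring

theorem lap_sol (p : ℝ × ℝ) : lap (sol t) p = -(4 * exp (2 * p.1) / denom t p ^ 2) := by
  obtain ⟨x, y⟩ := p
  rw [lap, pdx_pdx_sol, pdy_pdy_sol]
  linear_combination (-1 / denom t (x, y) ^ 2) * denom_mul_lap_denom_sub_sq_grad t x y

theorem exp_two_mul_sol (p : ℝ × ℝ) : exp (2 * sol t p) = 4 * exp (2 * p.1) / denom t p ^ 2 := by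
  have hpos : 0 < 2 * exp p.1 / denom t p := div_pos (by positivity) (denom_pos t p)
  rw [exp_two_mul_eq_sq, sol, exp_log hpos, exp_two_mul_eq_sq]
  ring

theorem lap_sol_add_exp_two_mul_sol (p : ℝ × ℝ) : lap (sol t) p + exp (2 * sol t p) = 0 := by
  rw [lap_sol, exp_two_mul_sol, neg_add_cancel]

theorem sol_le (p : ℝ × ℝ) : sol t p ≤ log (2 * (1 + |t|)) := by
  have hD := denom_pos t p
  refine log_le_log (div_pos (by positivity) hD) ?_
  rw [div_le_iff₀ hD]
  nlinarith [sub_abs_sq_add_one_le_denom t p, abs_nonneg t, exp_pos p.1,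
    sq_nonneg (exp p.1 - |t| - 1 / 2), mul_nonneg (abs_nonneg t) (sq_nonneg (exp p.1 - |t|))]

end LiouvilleSolution

theorem stmt1_general (t : ℝ) (u : ℝ × ℝ → ℝ)
    (hu : ∀ p : ℝ × ℝ, u p =
      Real.log (2 * Real.exp p.1 /
        (1 + t ^ 2 + 2 * t * Real.exp p.1 * Real.cos p.2 + Real.exp (2 * p.1)))) :
    (∀ p : ℝ × ℝ, lap u p + Real.exp (2 * u p) = 0) ∧ (∃ M : ℝ, ∀ p : ℝ × ℝ, u p ≤ M) := by
  obtain rfl : u = LiouvilleSolution.sol t := funext hu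
  exact ⟨LiouvilleSolution.lap_sol_add_exp_two_mul_sol t,
    _, LiouvilleSolution.sol_le t⟩

theorem stmt1 (t : ℝ) (ht : 0 ≤ t) (u : ℝ × ℝ → ℝ)
    (hu : ∀ p : ℝ × ℝ, u p =
      Real.log (2 * Real.exp p.1 /
        (1 + t ^ 2 + 2 * t * Real.exp p.1 * Real.cos p.2 + Real.exp (2 * p.1)))) :
    (∀ p : ℝ × ℝ, lap u p + Real.exp (2 * u p) = 0) ∧ (∃ M : ℝ, ∀ p : ℝ × ℝ, u p ≤ M) :=
  stmt1_general t u hu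
end

section
/- Suppose u : ℝ² → ℝ satisfies Δu + e^{2u} = 0 and e^{-u} is a quadratic polynomial v. Then v(x) = (λ/2)|x - x₀|² + 1/(2λ) for some λ > 0 and x₀ ∈ ℝ². -/
/-! With `v = e^{-u}` one has `∇v = -v ∇u` and `Δv = v (|∇u|² - Δu)`, so the Liouville equation
`Δu + e^{2u} = 0` becomes `v Δv = |∇v|² + 1`. For `v = a x² + b xy + c y² + d x + e y + f` both
sides are polynomials, and comparing coefficients gives `b = 0`, `a = c` and
`4 a f = d² + e² + 1`. Since `f = v(0) > 0`, also `a > 0`, and completing the square gives the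
bubble with `λ = 2a`. -/

open ContinuousLinearMap

section ExpNeg

variable {E : Type*} [NormedAddCommGroup E] [NormedSpace ℝ E] {u : E → ℝ}

theorem fderiv_exp_neg_apply (hu : Differentiable ℝ u) (p w : E) :
    fderiv ℝ (fun r => Real.exp (-u r)) p w = -(Real.exp (-u p) * fderiv ℝ u p w) := by
  rw [HasFDerivAt.fderiv (f := fun r => Real.exp (-u r)) (hu p).hasFDerivAt.neg.exp]
  simp

theorem fderiv_fderiv_exp_neg_apply (hu : ContDiff ℝ 2 u) (p v w : E) :
    fderiv ℝ (fun q => fderiv ℝ (fun r => Real.exp (-u r)) q v) p w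
      = Real.exp (-u p) * (fderiv ℝ u p v * fderiv ℝ u p w
        - fderiv ℝ (fun q => fderiv ℝ u q v) p w) := by
  have hu₁ : Differentiable ℝ u := hu.differentiable (by norm_num)
  have huv : Differentiable ℝ (fun q => fderiv ℝ u q v) :=
    ((apply ℝ ℝ v).contDiff.comp (hu.fderiv_right (m := 1) (by norm_num))).differentiable
      (by norm_num)
  have hfun : (fun q => fderiv ℝ (fun r => Real.exp (-u r)) q v)
      = fun q => -(Real.exp (-u q) * fderiv ℝ u q v) :=
    funext fun q => fderiv_exp_neg_apply hu₁ q v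
  rw [hfun, HasFDerivAt.fderiv (f := fun q => -(Real.exp (-u q) * fderiv ℝ u q v))
    ((hu₁ p).hasFDerivAt.neg.exp.mul (huv p).hasFDerivAt).neg]
  simp only [Pi.neg_apply, smul_neg, neg_add_rev, neg_neg, add_apply, smul_apply, smul_eq_mul,
    neg_apply]
  ring

end ExpNeg

theorem exp_neg_mul_lap_exp_neg {u : ℝ × ℝ → ℝ} (hu : ContDiff ℝ 2 u) (p : ℝ × ℝ) :
    Real.exp (-u p) * lap (fun r => Real.exp (-u r)) p
      = pdx (fun r => Real.exp (-u r)) p ^ 2 + pdy (fun r => Real.exp (-u r)) p ^ 2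
        - Real.exp (-u p) ^ 2 * lap u p := by
  have hu₁ : Differentiable ℝ u := hu.differentiable (by norm_num)
  unfold lap pdx pdy
  rw [fderiv_fderiv_exp_neg_apply hu, fderiv_fderiv_exp_neg_apply hu,
    fderiv_exp_neg_apply hu₁, fderiv_exp_neg_apply hu₁]
  ring

theorem exp_neg_mul_lap_exp_neg_of_liouville {u : ℝ × ℝ → ℝ} (hreg : ContDiff ℝ 2 u)
    {p : ℝ × ℝ} (hu : lap u p + Real.exp (2 * u p) = 0) :
    Real.exp (-u p) * lap (fun r => Real.exp (-u r)) p
      = pdx (fun r => Real.exp (-u r)) p ^ 2 + pdy (fun r => Real.exp (-u r)) p ^ 2 + 1 := by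
  have hexp : Real.exp (-u p) ^ 2 * Real.exp (2 * u p) = 1 := by
    rw [← Real.exp_nat_mul, ← Real.exp_add]
    norm_num
  rw [exp_neg_mul_lap_exp_neg hreg p]
  linear_combination (-Real.exp (-u p) ^ 2) * hu + hexp

def quad (a b c d e f : ℝ) (q : ℝ × ℝ) : ℝ :=
  a * q.1 ^ 2 + b * q.1 * q.2 + c * q.2 ^ 2 + d * q.1 + e * q.2 + f

section Quad

variable (a b c d e f : ℝ)

theorem hasFDerivAt_quad (p : ℝ × ℝ) :
    HasFDerivAt (quad a b c d e f)
      ((2 * a * p.1 + b * p.2 + d) • fst ℝ ℝ ℝ + (b * p.1 + 2 * c * p.2 + e) • snd ℝ ℝ ℝ) p := by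
  have h₁ : HasFDerivAt (fun q : ℝ × ℝ => q.1) (fst ℝ ℝ ℝ) p := hasFDerivAt_fst
  have h₂ : HasFDerivAt (fun q : ℝ × ℝ => q.2) (snd ℝ ℝ ℝ) p := hasFDerivAt_snd
  have H := ((((((h₁.pow 2).const_mul a).add ((h₁.mul h₂).const_mul b)).add
    ((h₂.pow 2).const_mul c)).add (h₁.const_mul d)).add (h₂.const_mul e)).add_const f
  refine (H.congr_fderiv ?_).congr_of_eventuallyEq (.of_forall fun q => ?_)
  · ext <;>
      simp only [Nat.add_one_sub_one, pow_one, nsmul_eq_mul, Nat.cast_ofNat, smul_add, add_comp,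
        smul_comp, fst_comp_inl, snd_comp_inl, fst_comp_inr, snd_comp_inr, smul_zero, zero_add,
        add_zero, add_apply, smul_apply, id_apply, smul_eq_mul, mul_one] <;>
      ring
  · simp [quad, mul_assoc]

theorem pdx_quad : pdx (quad a b c d e f) = quad 0 0 0 (2 * a) b d := by
  funext p
  rw [pdx, (hasFDerivAt_quad a b c d e f p).fderiv]
  simp [quad]

theorem pdy_quad : pdy (quad a b c d e f) = quad 0 0 0 b (2 * c) e := by
  funext p
  rw [pdy, (hasFDerivAt_quad a b c d e f p).fderiv]
  simp [quad]

theorem lap_quad (p : ℝ × ℝ) : lap (quad a b c d e f) p = 2 * a + 2 * c := by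
  simp [lap, pdx_quad, pdy_quad, quad]

theorem coeffs_of_quad_mul_lap_eq
    (h : ∀ p, quad a b c d e f p * lap (quad a b c d e f) p
      = pdx (quad a b c d e f) p ^ 2 + pdy (quad a b c d e f) p ^ 2 + 1) :
    b = 0 ∧ a = c ∧ 4 * a * f = d ^ 2 + e ^ 2 + 1 := by
  simp only [lap_quad, pdx_quad, pdy_quad, quad] at h
  have h₀₀ := h (0, 0)
  have h₁₀ := h (1, 0)
  have h₁₀' := h (-1, 0)
  have h₀₁ := h (0, 1)
  have h₀₁' := h (0, -1)
  have h₁₁ := h (1, 1)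
  have h₁₁' := h (1, -1)
  norm_num at h₀₀ h₁₀ h₁₀' h₀₁ h₀₁' h₁₁ h₁₁'
  have hA : 2 * (a + c) * a = 4 * a ^ 2 + b ^ 2 := by
    linear_combination (1 / 2) * h₁₀ + (1 / 2) * h₁₀' - h₀₀
  have hC : 2 * (a + c) * c = b ^ 2 + 4 * c ^ 2 := by
    linear_combination (1 / 2) * h₀₁ + (1 / 2) * h₀₁' - h₀₀
  have hB : (a + c) * b = 0 := by
    linear_combination -(1 / 4) * h₁₁ + (1 / 4) * h₁₁' + (1 / 4) * h₀₁ - (1 / 4) * h₀₁'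
  have hac : a = c := by
    have : (a - c) ^ 2 + b ^ 2 = 0 := by linear_combination -(1 / 2) * hA - (1 / 2) * hC
    nlinarith [sq_nonneg (a - c), sq_nonneg b]
  have hF : 4 * a * f = d ^ 2 + e ^ 2 + 1 := by linear_combination h₀₀ + 2 * f * hac
  have ha : a ≠ 0 := by
    rintro rfl
    nlinarith [sq_nonneg d, sq_nonneg e]
  refine ⟨?_, hac, hF⟩
  rw [← hac] at hB
  simpa [ha] using hB

theorem exists_bubble_of_quad_mul_lap_eq (hf : 0 < f)
    (h : ∀ p, quad a b c d e f p * lap (quad a b c d e f) p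
      = pdx (quad a b c d e f) p ^ 2 + pdy (quad a b c d e f) p ^ 2 + 1) :
    ∃ lam : ℝ, 0 < lam ∧ ∃ x₀ : ℝ × ℝ, ∀ p : ℝ × ℝ,
      quad a b c d e f p = lam / 2 * ((p.1 - x₀.1) ^ 2 + (p.2 - x₀.2) ^ 2) + 1 / (2 * lam) := by
  obtain ⟨rfl, rfl, hF⟩ := coeffs_of_quad_mul_lap_eq a b c d e f h
  have ha : 0 < a := by nlinarith [sq_nonneg d, sq_nonneg e]
  refine ⟨2 * a, by positivity, (-d / (2 * a), -e / (2 * a)), fun p => ?_⟩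
  simp only [quad]
  field_simp
  linear_combination hF

end Quad

theorem stmt7 (u : ℝ × ℝ → ℝ) (hreg : ContDiff ℝ 2 u)
    (hu : ∀ p : ℝ × ℝ, lap u p + Real.exp (2 * u p) = 0)
    (hpoly : ∃ a b c d e f : ℝ, ∀ p : ℝ × ℝ,
      Real.exp (-u p) = a * p.1 ^ 2 + b * p.1 * p.2 + c * p.2 ^ 2 + d * p.1 + e * p.2 + f) :
    ∃ lam : ℝ, 0 < lam ∧ ∃ x₀ : ℝ × ℝ, ∀ p : ℝ × ℝ,
      Real.exp (-u p) = lam / 2 * ((p.1 - x₀.1) ^ 2 + (p.2 - x₀.2) ^ 2) + 1 / (2 * lam) := by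
  obtain ⟨a, b, c, d, e, f, hv⟩ := hpoly
  have hv' : (fun r => Real.exp (-u r)) = quad a b c d e f := funext hv
  have hf : 0 < f := by
    have h₀ := hv 0
    norm_num at h₀
    exact h₀ ▸ Real.exp_pos _
  have hpde : ∀ p, quad a b c d e f p * lap (quad a b c d e f) p
      = pdx (quad a b c d e f) p ^ 2 + pdy (quad a b c d e f) p ^ 2 + 1 := fun p => by
    rw [← hv']
    exact exp_neg_mul_lap_exp_neg_of_liouville hreg (hu p)
  obtain ⟨lam, hlam, x₀, hx₀⟩ := exists_bubble_of_quad_mul_lap_eq a b c d e f hf hpde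
  exact ⟨lam, hlam, x₀, fun p => (hv p).trans (hx₀ p)⟩
end

section
/- Let v(x₁,x₂) = c₁e^{x₁} + c₂e^{-x₁} + c₃ sin x₂ + c₄ cos x₂ with v > 0 everywhere, and suppose u = -ln v satisfies Δu + e^{2u} = 0 on ℝ². Then 4c₁c₂ = 1 + c₃² + c₄². -/
open Real

theorem fderiv_div_apply {E : Type*} [NormedAddCommGroup E] [NormedSpace ℝ E] {f g : E → ℝ}
    {p : E} (hf : DifferentiableAt ℝ f p) (hg : DifferentiableAt ℝ g p) (h0 : g p ≠ 0) (w : E) :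
    fderiv ℝ (fun q => f q / g q) p w = (fderiv ℝ f p w * g p - f p * fderiv ℝ g p w) / g p ^ 2 := by
  have h : HasFDerivAt (fun q => f q * (g q)⁻¹) _ p :=
    hf.hasFDerivAt.mul ((hasDerivAt_inv h0).comp_hasFDerivAt p hg.hasFDerivAt)
  simp only [div_eq_mul_inv]
  rw [h.fderiv]
  simp only [neg_smul, smul_neg, add_apply, neg_apply, smul_apply, smul_eq_mul]
  field_simp
  ring

theorem lap_neg_log {v : ℝ × ℝ → ℝ} {p : ℝ × ℝ} (hv : Differentiable ℝ v) (h0 : ∀ q, v q ≠ 0)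
    (hx : DifferentiableAt ℝ (pdx v) p) (hy : DifferentiableAt ℝ (pdy v) p) :
    lap (fun q => -log (v q)) p = -(v p * lap v p - pdx v p ^ 2 - pdy v p ^ 2) / v p ^ 2 := by
  have pd_neg_log : ∀ w : ℝ × ℝ,
      (fun q => fderiv ℝ (fun q => -log (v q)) q w) = fun q => -(fderiv ℝ v q w / v q) := by
    intro w
    funext q
    simp [fderiv_fun_neg, fderiv.log (hv q) (h0 q), inv_mul_eq_div]
  have pd_neg_div : ∀ w : ℝ × ℝ, DifferentiableAt ℝ (fun q => fderiv ℝ v q w) p →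
      fderiv ℝ (fun q => -(fderiv ℝ v q w / v q)) p w =
        -((fderiv ℝ (fun q => fderiv ℝ v q w) p w * v p - fderiv ℝ v p w ^ 2) / v p ^ 2) := by
    intro w hw
    rw [fderiv_fun_neg, neg_apply, fderiv_div_apply hw (hv p) (h0 p)]
    ring
  unfold lap pdx pdy at *
  rw [pd_neg_log, pd_neg_log, pd_neg_div _ hx, pd_neg_div _ hy]
  field_simp
  ring

theorem exp_two_mul_neg_log {x : ℝ} (hx : x ≠ 0) : exp (2 * -log x) = (x ^ 2)⁻¹ := by
  rw [mul_neg, ← Nat.cast_ofNat, ← log_pow, exp_neg, exp_log (pow_two_pos_of_ne_zero hx)]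

section FstAddSnd

variable {a a' a'' b b' b'' : ℝ → ℝ}

theorem hasFDerivAt_fst_add_snd (ha : ∀ x, HasDerivAt a (a' x) x)
    (hb : ∀ y, HasDerivAt b (b' y) y) (p : ℝ × ℝ) :
    HasFDerivAt (fun q : ℝ × ℝ => a q.1 + b q.2)
      (a' p.1 • ContinuousLinearMap.fst ℝ ℝ ℝ + b' p.2 • ContinuousLinearMap.snd ℝ ℝ ℝ) p := by
  have hfst : HasFDerivAt (fun q : ℝ × ℝ => a q.1) (a' p.1 • ContinuousLinearMap.fst ℝ ℝ ℝ) p :=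
    (ha p.1).comp_hasFDerivAt p hasFDerivAt_fst
  have hsnd : HasFDerivAt (fun q : ℝ × ℝ => b q.2) (b' p.2 • ContinuousLinearMap.snd ℝ ℝ ℝ) p :=
    (hb p.2).comp_hasFDerivAt p hasFDerivAt_snd
  exact hfst.add hsnd

theorem pdx_fst_add_snd (ha : ∀ x, HasDerivAt a (a' x) x) (hb : ∀ y, HasDerivAt b (b' y) y) :
    pdx (fun q => a q.1 + b q.2) = fun q => a' q.1 := by
  funext q
  simp [pdx, (hasFDerivAt_fst_add_snd ha hb q).fderiv]

theorem pdy_fst_add_snd (ha : ∀ x, HasDerivAt a (a' x) x) (hb : ∀ y, HasDerivAt b (b' y) y) :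
    pdy (fun q => a q.1 + b q.2) = fun q => b' q.2 := by
  funext q
  simp [pdy, (hasFDerivAt_fst_add_snd ha hb q).fderiv]

theorem pdx_comp_fst (ha : ∀ x, HasDerivAt a (a' x) x) :
    pdx (fun q => a q.1) = fun q => a' q.1 := by
  simpa using pdx_fst_add_snd ha (fun y => hasDerivAt_const y (0 : ℝ))

theorem pdy_comp_snd (hb : ∀ y, HasDerivAt b (b' y) y) :
    pdy (fun q => b q.2) = fun q => b' q.2 := by
  simpa using pdy_fst_add_snd (fun x => hasDerivAt_const x (0 : ℝ)) hb

theorem lap_neg_log_fst_add_snd (ha : ∀ x, HasDerivAt a (a' x) x)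
    (ha' : ∀ x, HasDerivAt a' (a'' x) x) (hb : ∀ y, HasDerivAt b (b' y) y)
    (hb' : ∀ y, HasDerivAt b' (b'' y) y) (h0 : ∀ q : ℝ × ℝ, a q.1 + b q.2 ≠ 0) (p : ℝ × ℝ) :
    lap (fun q => -log (a q.1 + b q.2)) p =
      -((a p.1 + b p.2) * (a'' p.1 + b'' p.2) - a' p.1 ^ 2 - b' p.2 ^ 2) / (a p.1 + b p.2) ^ 2 := by
  have hv : Differentiable ℝ (fun q : ℝ × ℝ => a q.1 + b q.2) := fun q =>
    (hasFDerivAt_fst_add_snd ha hb q).differentiableAt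
  have hx : DifferentiableAt ℝ (pdx fun q => a q.1 + b q.2) p := by
    rw [pdx_fst_add_snd ha hb]
    exact (ha' p.1).differentiableAt.comp p differentiableAt_fst
  have hy : DifferentiableAt ℝ (pdy fun q => a q.1 + b q.2) p := by
    rw [pdy_fst_add_snd ha hb]
    exact (hb' p.2).differentiableAt.comp p differentiableAt_snd
  rw [lap_neg_log hv h0 hx hy, lap, pdx_fst_add_snd ha hb, pdy_fst_add_snd ha hb,
    pdx_comp_fst ha', pdy_comp_snd hb']

end FstAddSnd

theorem hasDerivAt_exp_add_exp_neg (c₁ c₂ x : ℝ) :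
    HasDerivAt (fun x => c₁ * exp x + c₂ * exp (-x)) (c₁ * exp x + -c₂ * exp (-x)) x := by
  refine (((hasDerivAt_exp x).const_mul c₁).add
    (((hasDerivAt_neg x).exp).const_mul c₂)).congr_deriv ?_
  ring

theorem hasDerivAt_sin_add_cos (c₃ c₄ y : ℝ) :
    HasDerivAt (fun y => c₃ * sin y + c₄ * cos y) (-c₄ * sin y + c₃ * cos y) y := by
  refine (((hasDerivAt_sin y).const_mul c₃).add ((hasDerivAt_cos y).const_mul c₄)).congr_deriv ?_
  ring

theorem stmt8 (c₁ c₂ c₃ c₄ : ℝ) (v u : ℝ × ℝ → ℝ)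
    (hv : ∀ p : ℝ × ℝ,
      v p = c₁ * Real.exp p.1 + c₂ * Real.exp (-p.1) + c₃ * Real.sin p.2 + c₄ * Real.cos p.2)
    (hpos : ∀ p : ℝ × ℝ, 0 < v p)
    (hu : ∀ p : ℝ × ℝ, u p = -Real.log (v p))
    (heq : ∀ p : ℝ × ℝ, lap u p + Real.exp (2 * u p) = 0) :
    4 * c₁ * c₂ = 1 + c₃ ^ 2 + c₄ ^ 2 := by
  obtain rfl : u = fun p => -log (v p) := funext hu
  obtain rfl : v = fun p => (c₁ * exp p.1 + c₂ * exp (-p.1)) + (c₃ * sin p.2 + c₄ * cos p.2) :=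
    funext fun p => by rw [hv]; ring
  have h := heq 0
  rw [lap_neg_log_fst_add_snd (hasDerivAt_exp_add_exp_neg c₁ c₂)
    (hasDerivAt_exp_add_exp_neg c₁ (-c₂)) (hasDerivAt_sin_add_cos c₃ c₄)
    (hasDerivAt_sin_add_cos (-c₄) c₃) (fun q => (hpos q).ne'),
    exp_two_mul_neg_log (hpos 0).ne'] at h
  have hv0 := (hpos 0).ne'
  field_simp at h
  simp only [Prod.fst_zero, Prod.snd_zero, exp_zero, neg_zero, sin_zero, cos_zero, mul_one,
    mul_zero, zero_add, zero_mul, neg_sub] at h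
  linarith
end

section
/- For every κ ∈ ℝ and t ≥ 0, the function u(x₁,x₂) = ln( 2e^{x₂} / ( (√(κ²+t²+1) − κ) + 2t cos(x₁) e^{x₂} + (√(κ²+t²+1) + κ) e^{2x₂} ) ) satisfies Δu + e^{2u} = 0 in the upper half plane ℝ²₊ and the boundary condition ∂u/∂x₂(x₁, 0) = −κ e^{u(x₁,0)} on x₂ = 0. -/
/-!
With `F = s cosh x₂ + κ sinh x₂ + t cos x₁` the denominator in `u` is `2 e^{x₂} F`, so
`u = -log F`. For any nonvanishing `F`, `Δ (log F) = (F ΔF - |∇F|²) / F²` and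
`e^{-2 log F} = 1 / F²`, so `u` solves Liouville's equation exactly when `F ΔF - |∇F|² = 1`.
Here `ΔF = s cosh x₂ + κ sinh x₂ - t cos x₁`, and the identity becomes
`(s² - κ²)(cosh² - sinh²) - t² (cos² + sin²) = 1`, i.e. `s² = κ² + t² + 1`.
On the boundary `∂₂ F (x₁, 0) = κ`, whence `∂₂ u = -κ / F = -κ eᵘ`.
-/

open Real

section Directional

variable {E : Type*} [NormedAddCommGroup E] [NormedSpace ℝ E] {F G : E → ℝ} {p : E}

theorem fderiv_log_apply (hF : DifferentiableAt ℝ F p) (hp : F p ≠ 0) (v : E) :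
    fderiv ℝ (fun q => log (F q)) p v = fderiv ℝ F p v / F p := by
  rw [(hF.hasFDerivAt.log hp).fderiv]
  simp [div_eq_inv_mul]

theorem fderiv_div_apply_s18 (hG : DifferentiableAt ℝ G p) (hF : DifferentiableAt ℝ F p)
    (hp : F p ≠ 0) (v : E) :
    fderiv ℝ (fun q => G q / F q) p v =
      (fderiv ℝ G p v * F p - G p * fderiv ℝ F p v) / F p ^ 2 := by
  simp only [div_eq_mul_inv]
  have h : HasFDerivAt (fun q => G q * (F q)⁻¹) _ p :=
    hG.hasFDerivAt.mul ((hasDerivAt_inv hp).comp_hasFDerivAt p hF.hasFDerivAt)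
  rw [h.fderiv]
  simp only [neg_smul, smul_neg, add_apply, neg_apply, smul_apply, smul_eq_mul]
  field_simp
  ring

theorem fderiv_fderiv_log_apply (hF : ContDiff ℝ 2 F) (hF0 : ∀ q, F q ≠ 0) (p v : E) :
    fderiv ℝ (fun q => fderiv ℝ (fun q => log (F q)) q v) p v =
      (F p * fderiv ℝ (fun q => fderiv ℝ F q v) p v - fderiv ℝ F p v ^ 2) / F p ^ 2 := by
  have hdF : Differentiable ℝ F := hF.differentiable (by norm_num)
  have hdF' : Differentiable ℝ (fun q => fderiv ℝ F q v) :=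
    ((hF.fderiv_right (m := 1) (by norm_num)).clm_apply contDiff_const).differentiable
      (by norm_num)
  simp only [fun q => fderiv_log_apply (hdF q) (hF0 q) v]
  rw [fderiv_div_apply_s18 (hdF' p) (hdF p) (hF0 p)]
  ring

end Directional

theorem pdx_eq_deriv {f : ℝ × ℝ → ℝ} {x y : ℝ} (hf : DifferentiableAt ℝ f (x, y)) :
    pdx f (x, y) = deriv (fun x' => f (x', y)) x :=
  (hf.hasFDerivAt.comp_hasDerivAt x ((hasDerivAt_id x).prodMk (hasDerivAt_const x y))).deriv.symm

theorem pdy_eq_deriv {f : ℝ × ℝ → ℝ} {x y : ℝ} (hf : DifferentiableAt ℝ f (x, y)) :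
    pdy f (x, y) = deriv (fun y' => f (x, y')) y :=
  (hf.hasFDerivAt.comp_hasDerivAt y ((hasDerivAt_const y x).prodMk (hasDerivAt_id y))).deriv.symm

theorem lap_neg (f : ℝ × ℝ → ℝ) (p : ℝ × ℝ) : lap (fun q => -f q) p = -lap f p := by
  unfold lap pdx pdy
  simp only [fderiv_fun_neg, neg_apply]
  ring

theorem lap_log {F : ℝ × ℝ → ℝ} (hF : ContDiff ℝ 2 F) (hF0 : ∀ q, F q ≠ 0) (p : ℝ × ℝ) :
    lap (fun q => log (F q)) p = (F p * lap F p - (pdx F p ^ 2 + pdy F p ^ 2)) / F p ^ 2 := by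
  unfold lap pdx pdy
  rw [fderiv_fderiv_log_apply hF hF0, fderiv_fderiv_log_apply hF hF0]
  field_simp
  ring

theorem pdy_neg_log {F : ℝ × ℝ → ℝ} {p : ℝ × ℝ} (hF : DifferentiableAt ℝ F p) (hp : F p ≠ 0) :
    pdy (fun q => -log (F q)) p = -(pdy F p / F p) := by
  unfold pdy
  rw [fderiv_fun_neg, neg_apply, fderiv_log_apply hF hp]

theorem lap_neg_log_add_exp_two_mul {F : ℝ × ℝ → ℝ} (hF : ContDiff ℝ 2 F) (hF0 : ∀ q, F q ≠ 0)
    {p : ℝ × ℝ} (hp : F p * lap F p - (pdx F p ^ 2 + pdy F p ^ 2) = 1) :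
    lap (fun q => -log (F q)) p + exp (2 * -log (F p)) = 0 := by
  have hexp : exp (2 * -log (F p)) = (F p ^ 2)⁻¹ := by
    have hsq : 0 < F p ^ 2 := by positivity [hF0 p]
    rw [mul_neg, exp_neg, ← exp_log hsq, log_pow]
    push_cast
    ring
  rw [lap_neg, lap_log hF hF0, hp, hexp]
  ring

noncomputable def liouvilleProfile (s κ t : ℝ) (q : ℝ × ℝ) : ℝ :=
  s * cosh q.2 + κ * sinh q.2 + t * cos q.1

section Profile

variable {s κ t : ℝ}

theorem contDiff_liouvilleProfile : ContDiff ℝ 2 (liouvilleProfile s κ t) := by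
  unfold liouvilleProfile
  fun_prop

theorem pdx_liouvilleProfile : pdx (liouvilleProfile s κ t) = fun q => -(t * sin q.1) := by
  funext ⟨x, y⟩
  rw [pdx_eq_deriv (contDiff_liouvilleProfile.differentiable (by norm_num) _)]
  simp [liouvilleProfile]

theorem pdy_liouvilleProfile :
    pdy (liouvilleProfile s κ t) = fun q => s * sinh q.2 + κ * cosh q.2 := by
  funext ⟨x, y⟩
  rw [pdy_eq_deriv (contDiff_liouvilleProfile.differentiable (by norm_num) _)]
  simp [liouvilleProfile]

theorem lap_liouvilleProfile (q : ℝ × ℝ) :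
    lap (liouvilleProfile s κ t) q = s * cosh q.2 + κ * sinh q.2 - t * cos q.1 := by
  obtain ⟨x, y⟩ := q
  rw [lap, pdx_liouvilleProfile, pdy_liouvilleProfile, pdx_eq_deriv (by fun_prop),
    pdy_eq_deriv (by fun_prop)]
  simp [sub_eq_neg_add]

theorem liouvilleProfile_pos (hs0 : 0 ≤ s) (hs : s ^ 2 = κ ^ 2 + t ^ 2 + 1) (q : ℝ × ℝ) :
    0 < liouvilleProfile s κ t q := by
  obtain ⟨x, y⟩ := q
  have hsκ : 0 < s + κ := by nlinarith
  have hsκ' : 0 < s - κ := by nlinarith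
  have hA : 0 < s * cosh y + κ * sinh y := by
    have h₁ := mul_pos hsκ (exp_pos y)
    have h₂ := mul_pos hsκ' (exp_pos (-y))
    rw [← cosh_add_sinh] at h₁
    rw [← cosh_sub_sinh] at h₂
    linarith
  have hA2 : (s * cosh y + κ * sinh y) ^ 2 = (s * sinh y + κ * cosh y) ^ 2 + t ^ 2 + 1 := by
    linear_combination (s ^ 2 - κ ^ 2) * cosh_sq_sub_sinh_sq y + hs
  unfold liouvilleProfile
  nlinarith [cos_sq_le_one x, sq_nonneg (s * sinh y + κ * cosh y), sq_nonneg (t * cos x)]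

theorem liouvilleProfile_mul_lap_sub_grad_sq (hs : s ^ 2 = κ ^ 2 + t ^ 2 + 1) (q : ℝ × ℝ) :
    liouvilleProfile s κ t q * lap (liouvilleProfile s κ t) q -
      (pdx (liouvilleProfile s κ t) q ^ 2 + pdy (liouvilleProfile s κ t) q ^ 2) = 1 := by
  rw [lap_liouvilleProfile, pdx_liouvilleProfile, pdy_liouvilleProfile, liouvilleProfile]
  linear_combination
    (s ^ 2 - κ ^ 2) * cosh_sq_sub_sinh_sq q.2 - t ^ 2 * sin_sq_add_cos_sq q.1 + hs

theorem log_div_eq_neg_log_liouvilleProfile (x y : ℝ) :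
    log (2 * exp y / ((s - κ) + 2 * t * cos x * exp y + (s + κ) * exp (2 * y))) =
      -log (liouvilleProfile s κ t (x, y)) := by
  have hD : (s - κ) + 2 * t * cos x * exp y + (s + κ) * exp (2 * y) =
      2 * exp y * liouvilleProfile s κ t (x, y) := by
    rw [liouvilleProfile, cosh_eq, sinh_eq, exp_neg, two_mul y, exp_add]
    field_simp
    ring
  rw [hD, div_mul_cancel_left₀ (by positivity), log_inv]

end Profile

theorem stmt18_general (κ t : ℝ) (u : ℝ × ℝ → ℝ)
    (hu : ∀ p : ℝ × ℝ, u p =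
      Real.log (2 * Real.exp p.2 /
        ((Real.sqrt (κ ^ 2 + t ^ 2 + 1) - κ) + 2 * t * Real.cos p.1 * Real.exp p.2 +
          (Real.sqrt (κ ^ 2 + t ^ 2 + 1) + κ) * Real.exp (2 * p.2)))) :
    (∀ p : ℝ × ℝ, 0 < p.2 → lap u p + Real.exp (2 * u p) = 0) ∧
    (∀ x₁ : ℝ, pdy u (x₁, 0) = -κ * Real.exp (u (x₁, 0))) := by
  set s := √(κ ^ 2 + t ^ 2 + 1)
  have hs : s ^ 2 = κ ^ 2 + t ^ 2 + 1 := sq_sqrt (by positivity)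
  set F := liouvilleProfile s κ t
  have hF : ∀ q, 0 < F q := liouvilleProfile_pos (sqrt_nonneg _) hs
  have hF0 : ∀ q, F q ≠ 0 := fun q => (hF q).ne'
  obtain rfl : u = fun q => -log (F q) :=
    funext fun q => (hu q).trans (log_div_eq_neg_log_liouvilleProfile q.1 q.2)
  refine ⟨fun p _ => lap_neg_log_add_exp_two_mul contDiff_liouvilleProfile hF0
    (liouvilleProfile_mul_lap_sub_grad_sq hs p), fun x => ?_⟩
  rw [pdy_neg_log (contDiff_liouvilleProfile.differentiable (by norm_num) _) (hF0 _),
    pdy_liouvilleProfile, exp_neg, exp_log (hF _)]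
  simp only [sinh_zero, cosh_zero]
  ring

theorem stmt18 (κ t : ℝ) (ht : 0 ≤ t) (u : ℝ × ℝ → ℝ)
    (hu : ∀ p : ℝ × ℝ, u p =
      Real.log (2 * Real.exp p.2 /
        ((Real.sqrt (κ ^ 2 + t ^ 2 + 1) - κ) + 2 * t * Real.cos p.1 * Real.exp p.2 +
          (Real.sqrt (κ ^ 2 + t ^ 2 + 1) + κ) * Real.exp (2 * p.2)))) :
    (∀ p : ℝ × ℝ, 0 < p.2 → lap u p + Real.exp (2 * u p) = 0) ∧
    (∀ x₁ : ℝ, pdy u (x₁, 0) = -κ * Real.exp (u (x₁, 0))) :=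
  stmt18_general κ t u hu
end

section
/- Let u : ℝ²₊ → ℝ be C² up to the boundary, satisfying Δu + e^{2u} = 0 in the open upper half plane and ∂u/∂x₂(x₁,0) = −κ e^{u(x₁,0)} on the boundary for a constant κ ∈ ℝ. Then the holomorphic function P = u_{zz} − u_z² is real-valued on the real axis, i.e. Im(u_{zz} − u_z²)(x₁, 0) = (1/2)(u_{x₁}u_{x₂} − u_{x₁x₂})(x₁,0) = 0 for all x₁ ∈ ℝ. -/
theorem hasDerivAt_pdx {f : ℝ × ℝ → ℝ} {x y : ℝ} (hf : DifferentiableAt ℝ f (x, y)) :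
    HasDerivAt (fun t : ℝ => f (t, y)) (pdx f (x, y)) x :=
  hf.hasFDerivAt.comp_hasDerivAt x ((hasDerivAt_id x).prodMk (hasDerivAt_const x y))

theorem ContDiff.pdy {n : ℕ} {f : ℝ × ℝ → ℝ} (hf : ContDiff ℝ (n + 1) f) :
    ContDiff ℝ n (pdy f) :=
  (hf.fderiv_right le_rfl).clm_apply contDiff_const

theorem pdx_pdy_eq_pdx_mul_pdy_of_pdy_eq_neg_mul_exp (κ : ℝ) {u : ℝ × ℝ → ℝ} (hu : ContDiff ℝ 2 u)
    (hbd : ∀ x₁ : ℝ, pdy u (x₁, 0) = -κ * Real.exp (u (x₁, 0))) (x₁ : ℝ) :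
    pdx (pdy u) (x₁, 0) = pdx u (x₁, 0) * pdy u (x₁, 0) := by
  have hpdy : HasDerivAt (fun t : ℝ => pdy u (t, 0)) (pdx (pdy u) (x₁, 0)) x₁ :=
    hasDerivAt_pdx ((ContDiff.pdy (n := 1) hu).differentiable (by norm_num) _)
  have hexp : HasDerivAt (fun t : ℝ => -κ * Real.exp (u (t, 0)))
      (-κ * (Real.exp (u (x₁, 0)) * pdx u (x₁, 0))) x₁ :=
    ((hasDerivAt_pdx (hu.differentiable (by norm_num) _)).exp).const_mul (-κ)
  rw [funext hbd] at hpdy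
  rw [hpdy.unique hexp, hbd x₁]
  ring

theorem stmt19_general (κ : ℝ) (u : ℝ × ℝ → ℝ) (hreg : ContDiff ℝ 3 u)
    (hbd : ∀ x₁ : ℝ, pdy u (x₁, 0) = -κ * Real.exp (u (x₁, 0))) :
    ∀ x₁ : ℝ,
      pdx (pdy u) (x₁, 0) = pdx u (x₁, 0) * pdy u (x₁, 0) ∧
      (1 / 2) * (pdx u (x₁, 0) * pdy u (x₁, 0) - pdx (pdy u) (x₁, 0)) = 0 := by
  intro x₁
  have h := pdx_pdy_eq_pdx_mul_pdy_of_pdy_eq_neg_mul_exp κ (hreg.of_le (by norm_num)) hbd x₁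
  exact ⟨h, by rw [h]; ring⟩

theorem stmt19 (κ : ℝ) (u : ℝ × ℝ → ℝ) (hreg : ContDiff ℝ 3 u)
    (heq : ∀ p : ℝ × ℝ, 0 < p.2 → lap u p + Real.exp (2 * u p) = 0)
    (hbd : ∀ x₁ : ℝ, pdy u (x₁, 0) = -κ * Real.exp (u (x₁, 0))) :
    ∀ x₁ : ℝ,
      pdx (pdy u) (x₁, 0) = pdx u (x₁, 0) * pdy u (x₁, 0) ∧
      (1 / 2) * (pdx u (x₁, 0) * pdy u (x₁, 0) - pdx (pdy u) (x₁, 0)) = 0 :=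
  stmt19_general κ u hreg hbd
end
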